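/- arXiv:1509.05632 — 5 statements merged into one kernel-verified Lean document; each statement's English description precedes it below -/
import Mathlib

section
/- Let A be a subsemigroup of (ℕ,+) (i.e., a set of nonnegative integers closed under addition) containing two elements n < m, and set p = m − n. Then A contains the arithmetic progression {n² + kp : k ≥ 0}, that is, n² + kp ∈ A for every integer k ≥ 0. -/
/-!
Write `m = n + p` and divide `k = q n + r` with `0 ≤ r < n`. Then
`n² + k p = (n - r + q p) · n + r · m`, a combination of `n` and `m` with nonnegative
coefficients that are not both zero (the first is positive because `r < n`), and every such
combination lies in an additively closed set containing `n` and `m`.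
-/

section AddClosed

variable {M : Type*} [AddMonoid M] {A : Set M} (hA : ∀ a ∈ A, ∀ b ∈ A, a + b ∈ A)
include hA

theorem nsmul_mem_of_add_closed {x : M} (hx : x ∈ A) {c : ℕ} (hc : 0 < c) : c • x ∈ A := by
  induction c, hc using Nat.le_induction with
  | base => simpa using hx
  | succ c _ ih => simpa [succ_nsmul] using hA _ ih _ hx

theorem nsmul_add_nsmul_mem_of_add_closed {x y : M} (hx : x ∈ A) (hy : y ∈ A) {a b : ℕ}
    (hab : 0 < a + b) : a • x + b • y ∈ A := by
  rcases a.eq_zero_or_pos with rfl | ha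
  · simpa using nsmul_mem_of_add_closed hA hy (by omega)
  rcases b.eq_zero_or_pos with rfl | hb
  · simpa using nsmul_mem_of_add_closed hA hx ha
  exact hA _ (nsmul_mem_of_add_closed hA hx ha) _ (nsmul_mem_of_add_closed hA hy hb)

end AddClosed

theorem sq_add_mul_eq_div_mod (n p k : ℕ) :
    n ^ 2 + k * p = (n - k % n + k / n * p) * n + k % n * (n + p) := by
  rcases n.eq_zero_or_pos with rfl | hn
  · simp
  have hdiv := Nat.div_add_mod k n
  have hr : k % n + (n - k % n) = n := Nat.add_sub_of_le (Nat.mod_lt k hn).le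
  calc n ^ 2 + k * p = (k % n + (n - k % n)) * n + (n * (k / n) + k % n) * p := by
        rw [hr, hdiv]; ring
    _ = _ := by ring

/-- If `A` is a subsemigroup of `(ℕ,+)` containing `n < m`, and `p = m - n`,
then `n² + k*p ∈ A` for every `k ≥ 0`. -/
theorem stmt0 (A : Set ℕ) (hA : ∀ a ∈ A, ∀ b ∈ A, a + b ∈ A)
    (n m : ℕ) (hn : n ∈ A) (hm : m ∈ A) (hlt : n < m) :
    ∀ k : ℕ, n ^ 2 + k * (m - n) ∈ A := by
  intro k
  rcases n.eq_zero_or_pos with rfl | hn0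
  · -- `0 ∈ A` here, so one copy of `n` can be added for free
    simpa using nsmul_add_nsmul_mem_of_add_closed hA hm hn (a := k) (b := 1) (by omega)
  obtain ⟨p, rfl⟩ := Nat.exists_eq_add_of_le hlt.le
  have hr : k % n < n := Nat.mod_lt k hn0
  rw [Nat.add_sub_cancel_left, sq_add_mul_eq_div_mod]
  simpa using nsmul_add_nsmul_mem_of_add_closed hA hn hm (a := n - k % n + k / n * p)
    (b := k % n) (by omega)
end

section
/- Let n > 4 and let G be a complete edge-colored graph with coloring γ in which no n-cycle is rainbow. Suppose G contains a rainbow (3n−8)-cycle v_0 → v_1 → ⋯ → v_{3n−9} → v_0, and let c_i = γ(v_i, v_{i+1}) denote its (pairwise distinct) edge colors, all indices taken modulo 3n−8. Then there is a dihedral relabeling σ of ℤ/(3n−8) (a map of the form σ(i) = i + t or σ(i) = t − i for some t) such that, setting w_i = v_{σ(i)} and d_i = γ(w_i, w_{i+1}), one has γ(w_i, w_{i+n−1}) ∈ {d_i, d_{i+1}} for every i modulo 3n−8. -/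
/-- A rainbow `m`-cycle in the complete graph on `V` edge-colored by `γ`:
pairwise distinct vertices `v i` (`i` mod `m`) with pairwise distinct edge colors
`γ (v i) (v (i+1))`. -/
def RainbowCycle {V C : Type*} (γ : V → V → C) (m : ℕ) (v : ZMod m → V) : Prop :=
  Function.Injective v ∧ Function.Injective (fun i : ZMod m => γ (v i) (v (i + 1)))

/-!
For each `i`, the `n`-cycle made of the arc `v i, …, v (i + n - 1)` and its chord is not
rainbow, so the chord colour is `c (i + K i)` for some `K i ≤ n - 2`. If `K i ≥ 2`, the chords
at `i` and at `j = i + 2n - 5` (which ends at `i + 2`) close the `n`-cycle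
`v (i + n - 1), …, v j, v (i + 2), v (i + 1), v i`, which is rainbow unless `K j ≥ n - 3`.
As `3 (2n - 5) ≡ 1 (mod 3n - 8)`, one `K i ≥ 2` forces `K ≥ n - 3` everywhere, and then the
reflection `i ↦ -i` works; otherwise `K ≤ 1` everywhere and the identity works.
-/

open Set

theorem ZMod.val_add_one_eq_ite {n : ℕ} [NeZero n] (a : ZMod n) :
    (a + 1).val = if a.val < n - 1 then a.val + 1 else 0 := by
  have ha := a.val_lt
  rw [ZMod.val_add, ZMod.val_one_eq_one_mod, Nat.add_mod_mod]
  split_ifs with h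
  · exact Nat.mod_eq_of_lt (by omega)
  · rw [show a.val + 1 = n by omega, Nat.mod_self]

theorem ZMod.forall_of_forall_add_one {m : ℕ} [NeZero m] {P : ZMod m → Prop} {a : ZMod m}
    (ha : P a) (hP : ∀ i, P i → P (i + 1)) (j : ZMod m) : P j := by
  have hk : ∀ k : ℕ, P (a + k) := fun k => by
    induction k with
    | zero => simpa using ha
    | succ k ih => simpa [add_assoc] using hP _ ih
  simpa using hk (j - a).val

section

variable {V C : Type*} (γ : V → V → C)

theorem exists_closing_color_eq {n : ℕ} [NeZero n]
    (hno : ∀ u : ZMod n → V, ¬ RainbowCycle γ n u) (f : ℕ → V) (hf : InjOn f (Iio n))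
    (hc : InjOn (fun j => γ (f j) (f (j + 1))) (Iio (n - 1))) :
    ∃ j < n - 1, γ (f (n - 1)) (f 0) = γ (f j) (f (j + 1)) := by
  by_contra! hclose
  refine hno (fun j => f j.val)
    ⟨fun a b hab => ZMod.val_injective n (hf a.val_lt b.val_lt hab), ?_⟩
  have hlast : ∀ a : ZMod n, ¬ a.val < n - 1 → a.val = n - 1 := fun a h => by
    have := a.val_lt; omega
  intro a b hab
  simp only [ZMod.val_add_one_eq_ite] at hab
  apply ZMod.val_injective n
  split_ifs at hab with ha hb hb
  · exact hc ha hb hab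
  · exact absurd (hlast b hb ▸ hab.symm) (hclose _ ha)
  · exact absurd (hlast a ha ▸ hab) (hclose _ hb)
  · rw [hlast a ha, hlast b hb]

theorem chord_index_ge_of_two_le (hsymm : ∀ x y, γ x y = γ y x) {n k₁ k₂ : ℕ} (hn : 4 < n)
    (hno : ∀ u : ZMod n → V, ¬ RainbowCycle γ n u)
    (w : ℕ → V) (hw : InjOn w (Iio (3 * n - 8)))
    (hc : InjOn (fun k => γ (w k) (w (k + 1))) (Iio (3 * n - 8)))
    (hk₁ : 2 ≤ k₁) (hk₁' : k₁ < n - 1) (h₁ : γ (w 0) (w (n - 1)) = γ (w k₁) (w (k₁ + 1)))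
    (h₂ : γ (w (2 * n - 5)) (w 2) = γ (w (2 * n - 5 + k₂)) (w (2 * n - 5 + k₂ + 1))) :
    n - 3 ≤ k₂ := by
  by_contra! hk₂
  have : NeZero n := ⟨by omega⟩
  -- `p` lists the vertices of the `n`-cycle `w (n - 1), …, w (2n - 5), w 2, w 1, w 0`,
  -- `X` the indices of its edge colours.
  set p : ℕ → ℕ := fun j => if j ≤ n - 4 then n - 1 + j else n - 1 - j with hp
  set X : ℕ → ℕ := fun j =>
    if j < n - 4 then n - 1 + j else if j = n - 4 then 2 * n - 5 + k₂ else n - 2 - j with hX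
  have hcolor : ∀ j < n - 1, γ (w (p j)) (w (p (j + 1))) = γ (w (X j)) (w (X j + 1)) := by
    intro j hj
    simp only [hp, hX]
    split_ifs <;> first
      | omega
      | (congr 2 <;> omega)
      | (convert h₂ using 3 <;> omega)
      | (rw [hsymm]; congr 2 <;> omega)
  have hXlt : MapsTo X (Iio (n - 1)) (Iio (3 * n - 8)) := by
    intro j hj
    simp only [hX, mem_Iio] at hj ⊢
    split_ifs <;> omega
  have hXinj : InjOn X (Iio (n - 1)) := by
    intro a ha b hb hab
    simp only [hX, mem_Iio] at ha hb hab
    split_ifs at hab <;> omega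
  have hpinj : InjOn (fun j => w (p j)) (Iio n) := by
    refine hw.comp (fun a ha b hb hab => ?_) (fun j hj => ?_)
    · simp only [hp, mem_Iio] at ha hb hab
      split_ifs at hab <;> omega
    · simp only [hp, mem_Iio] at hj ⊢
      split_ifs <;> omega
  have hpcolor : InjOn (fun j => γ (w (p j)) (w (p (j + 1)))) (Iio (n - 1)) := by
    intro a ha b hb hab
    simp only [hcolor a ha, hcolor b hb] at hab
    exact hXinj ha hb (hc (hXlt ha) (hXlt hb) hab)
  obtain ⟨j, hj, hclose⟩ := exists_closing_color_eq γ hno _ hpinj hpcolor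
  have hp0 : p 0 = n - 1 := by simp [hp]
  have hplast : p (n - 1) = 0 := by simp only [hp]; split_ifs <;> omega
  rw [hp0, hplast, h₁, hcolor j hj] at hclose
  have := hc (by simp only [mem_Iio]; omega) (hXlt hj) hclose
  simp only [hX] at this
  split_ifs at this <;> omega

theorem chord_mem_of_index_le_one {m d k : ℕ} {v : ZMod m → V} {i : ZMod m}
    (h : γ (v i) (v (i + d)) = γ (v (i + k)) (v (i + k + 1))) (hk : k ≤ 1) :
    γ (v i) (v (i + d)) ∈ ({γ (v i) (v (i + 1)), γ (v (i + 1)) (v (i + 2))} : Set C) := by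
  interval_cases k
  · simp [h]
  · simp [h, add_assoc, one_add_one_eq_two]

theorem chord_mem_of_index_ge (hsymm : ∀ x y, γ x y = γ y x) {m d k : ℕ} {v : ZMod m → V}
    {i : ZMod m} (hk : d ≤ k + 2) (hk' : k < d)
    (h : γ (v (-(i + d))) (v (-(i + d) + d)) = γ (v (-(i + d) + k)) (v (-(i + d) + k + 1))) :
    γ (v (-i)) (v (-(i + d))) ∈
      ({γ (v (-i)) (v (-(i + 1))), γ (v (-(i + 1))) (v (-(i + 2)))} : Set C) := by
  rw [show -(i + (d : ZMod m)) + d = -i by ring, hsymm] at h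
  obtain rfl | rfl : d = k + 2 ∨ d = k + 1 := by omega
  · right
    rw [h, hsymm]
    congr 2 <;> push_cast <;> ring
  · left
    rw [h, hsymm]
    congr 2 <;> push_cast <;> ring

namespace RainbowCycle

variable {m n : ℕ} {v : ZMod m → V}

theorem injOn_natCast_add (hv : RainbowCycle γ m v) (i : ZMod m) :
    InjOn (fun k : ℕ => v (i + k)) (Iio m) :=
  fun _ ha _ hb h => CharP.natCast_injOn_Iio (ZMod m) m ha hb (add_left_cancel (hv.1 h))

theorem injOn_color_natCast_add (hv : RainbowCycle γ m v) (i : ZMod m) :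
    InjOn (fun k : ℕ => γ (v (i + k)) (v (i + (k + 1 : ℕ)))) (Iio m) := by
  intro a ha b hb h
  simp only [Nat.cast_succ, ← add_assoc] at h
  exact CharP.natCast_injOn_Iio (ZMod m) m ha hb (add_left_cancel (hv.2 h))

theorem exists_chord_color_eq (hsymm : ∀ x y, γ x y = γ y x) [NeZero n]
    (hno : ∀ u : ZMod n → V, ¬ RainbowCycle γ n u) (hnm : n ≤ m) (hv : RainbowCycle γ m v)
    (i : ZMod m) : ∃ k < n - 1, γ (v i) (v (i + (n - 1 : ℕ))) = γ (v (i + k)) (v (i + k + 1)) := by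
  obtain ⟨k, hk, h⟩ := exists_closing_color_eq γ hno (fun k : ℕ => v (i + k))
    ((hv.injOn_natCast_add γ i).mono (Iio_subset_Iio hnm))
    ((hv.injOn_color_natCast_add γ i).mono (Iio_subset_Iio (by omega)))
  refine ⟨k, hk, ?_⟩
  simpa [hsymm (v i), add_assoc] using h

theorem chord_index_step (hsymm : ∀ x y, γ x y = γ y x) (hn : 4 < n)
    (hno : ∀ u : ZMod n → V, ¬ RainbowCycle γ n u) {v : ZMod (3 * n - 8) → V}
    (hv : RainbowCycle γ (3 * n - 8) v) {K : ZMod (3 * n - 8) → ℕ} (hK : ∀ i, K i < n - 1)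
    (hKc : ∀ i, γ (v i) (v (i + (n - 1 : ℕ))) = γ (v (i + K i)) (v (i + K i + 1)))
    {i : ZMod (3 * n - 8)} (hi : 2 ≤ K i) : n - 3 ≤ K (i + (2 * n - 5 : ℕ)) := by
  refine chord_index_ge_of_two_le γ hsymm hn hno (fun k : ℕ => v (i + k))
    (hv.injOn_natCast_add γ i) (hv.injOn_color_natCast_add γ i) hi (hK i) ?_ ?_
  · simpa [add_assoc] using hKc i
  · have hwrap : ((2 * n - 5 : ℕ) : ZMod (3 * n - 8)) + (n - 1 : ℕ) = 2 := by
      rw [← Nat.cast_add, show 2 * n - 5 + (n - 1) = 3 * n - 8 + 2 by omega, Nat.cast_add,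
        ZMod.natCast_self, zero_add, Nat.cast_ofNat]
    simpa [add_assoc, hwrap] using hKc (i + (2 * n - 5 : ℕ))

end RainbowCycle

end

/-- If `n > 4`, no `n`-cycle is rainbow, and `v` is a rainbow `(3n-8)`-cycle
with colors `c i = γ (v i) (v (i+1))`, then after a dihedral relabeling `σ` of
`ℤ/(3n-8)` we have `γ (w i) (w (i+n-1)) ∈ {d i, d (i+1)}` for every `i`,
where `w i = v (σ i)` and `d i = γ (w i) (w (i+1))`. -/
theorem stmt3 {V C : Type*} (γ : V → V → C) (hsymm : ∀ x y, γ x y = γ y x)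
    (n : ℕ) (hn : 4 < n)
    (hno : ∀ u : ZMod n → V, ¬ RainbowCycle γ n u)
    (v : ZMod (3 * n - 8) → V) (hv : RainbowCycle γ (3 * n - 8) v) :
    ∃ σ : ZMod (3 * n - 8) → ZMod (3 * n - 8),
      ((∃ t, ∀ i, σ i = i + t) ∨ (∃ t, ∀ i, σ i = t - i)) ∧
      ∀ i : ZMod (3 * n - 8),
        γ (v (σ i)) (v (σ (i + ((n - 1 : ℕ) : ZMod (3 * n - 8))))) ∈
          ({γ (v (σ i)) (v (σ (i + 1))),
            γ (v (σ (i + 1))) (v (σ (i + 2)))} : Set C) := by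
  have : NeZero n := ⟨by omega⟩
  have : NeZero (3 * n - 8) := ⟨by omega⟩
  choose K hK hKc using hv.exists_chord_color_eq γ hsymm hno (by omega)
  by_cases hsmall : ∀ i, K i ≤ 1
  · exact ⟨fun i => i, Or.inl ⟨0, fun i => (add_zero i).symm⟩,
      fun i => chord_mem_of_index_le_one γ (hKc i) (hsmall i)⟩
  obtain ⟨i₀, hi₀⟩ : ∃ i₀, 1 < K i₀ := by simpa using hsmall
  set g : ZMod (3 * n - 8) := ((2 * n - 5 : ℕ) : ZMod (3 * n - 8))
  have hstep : ∀ i, 2 ≤ K i → n - 3 ≤ K (i + g) := fun i =>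
    hv.chord_index_step γ hsymm hn hno hK hKc
  have hg : g + g + g = 1 := by
    rw [← Nat.cast_add, ← Nat.cast_add, show 2 * n - 5 + (2 * n - 5) + (2 * n - 5) =
      2 * (3 * n - 8) + 1 by omega, Nat.cast_add, Nat.cast_mul, ZMod.natCast_self, mul_zero,
      zero_add, Nat.cast_one]
  have hall : ∀ j, 2 ≤ K j := ZMod.forall_of_forall_add_one hi₀ fun i hi => by
    have hg2 : ∀ x, 2 ≤ K x → 2 ≤ K (x + g) := fun x hx =>
      (by omega : 2 ≤ n - 3).trans (hstep x hx)
    rw [← hg, ← add_assoc, ← add_assoc]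
    exact hg2 _ (hg2 _ (hg2 _ hi))
  refine ⟨fun i => -i, Or.inr ⟨0, fun i => (zero_sub i).symm⟩, fun i => ?_⟩
  have hlarge := hstep _ (hall (-(i + (n - 1 : ℕ)) - g))
  rw [sub_add_cancel] at hlarge
  exact chord_mem_of_index_ge γ hsymm (by omega) (hK _) (hKc _)
end

section
/- Let n > 5 and let G be a complete edge-colored graph with coloring γ in which no n-cycle is rainbow. Suppose G contains a rainbow (3n−8)-cycle v_0 → v_1 → ⋯ → v_{3n−9} → v_0 with (pairwise distinct) edge colors c_i = γ(v_i, v_{i+1}), all indices taken modulo 3n−8, and suppose that γ(v_i, v_{i+n−1}) ∈ {c_i, c_{i+1}} for every i. Then γ(v_i, v_{i+n−5}) ∈ {c_{i+n−5}, c_{i+n−4}} for every i modulo 3n−8. -/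
/-!
For each `t ≤ n - 2` and each `i`, walk from `v i` along the chord to `v (i + n - 5)`, then `t`
steps along the big cycle, then along a chord of length `n - 1`, and then along the big cycle back
to `v i`. This is an `n`-cycle whose other `n - 1` edges have pairwise distinct colours
`c (i + d)`, since the `(n - 1)`-chord at `j` has colour `c j` or `c (j + 1)`. As it is not rainbow,
the first chord has colour `c (i + d)` with `d ∈ [n - 5, n - 4 + t] ∪ [2n - 6 + t, 3n - 9]`, and
the values `t = 0, 1, n - 2` leave only `d ∈ {n - 5, n - 4}`.
-/

open Function

theorem ZMod.apply_val_add_one {α : Type*} {n : ℕ} [NeZero n] {f : ℕ → α} (hf : f n = f 0)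
    (k : ZMod n) : f (k + 1).val = f (k.val + 1) := by
  have hval : (k + 1).val = (k.val + 1) % n := by
    rw [← ZMod.val_natCast, Nat.cast_add, ZMod.natCast_zmod_val, Nat.cast_one]
  rcases Nat.lt_or_eq_of_le (ZMod.val_lt k) with hlt | heq
  · rw [hval, Nat.mod_eq_of_lt hlt]
  · rw [hval, show k.val + 1 = n from heq, Nat.mod_self, hf]

theorem ZMod.natCast_injOn_Iio (N : ℕ) : Set.InjOn (Nat.cast : ℕ → ZMod N) (Set.Iio N) := by
  intro a ha b hb h
  rwa [ZMod.natCast_eq_natCast_iff', Nat.mod_eq_of_lt ha, Nat.mod_eq_of_lt hb] at h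

theorem StrictMono.eq_of_mem_Ico_succ {p : ℕ → ℕ} (hp : StrictMono p) {a j k : ℕ}
    (hj : a ∈ Set.Ico (p j) (p (j + 1))) (hk : a ∈ Set.Ico (p k) (p (k + 1))) : j = k := by
  have hjk : j < k + 1 := hp.lt_iff_lt.mp (hj.1.trans_lt hk.2)
  have hkj : k < j + 1 := hp.lt_iff_lt.mp (hk.1.trans_lt hj.2)
  omega

section
variable {V C : Type*} {γ : V → V → C}

theorem RainbowCycle.eq_of_color_eq {m : ℕ} {v : ZMod m → V} {c : ZMod m → C}
    (hv : RainbowCycle γ m v) (hc : ∀ i, c i = γ (v i) (v (i + 1))) {i : ZMod m} {a b : ℕ}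
    (ha : a < m) (hb : b < m) (h : c (i + a) = c (i + b)) : a = b := by
  have hcinj : Injective c := by simpa only [← hc] using hv.2
  exact ZMod.natCast_injOn_Iio m ha hb (add_left_cancel (hcinj h))

theorem exists_color_eq_of_not_rainbowCycle {n : ℕ} {u : ZMod n → V}
    (hno : ¬ RainbowCycle γ n u) (hu : Injective u)
    (hrest : Set.InjOn (fun k => γ (u k) (u (k + 1))) {0}ᶜ) :
    ∃ k ≠ 0, γ (u 0) (u (0 + 1)) = γ (u k) (u (k + 1)) := by
  obtain ⟨j, k, hjk, hne⟩ := not_injective_iff.mp fun h => hno ⟨hu, h⟩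
  by_cases hj : j = 0
  · subst hj; exact ⟨k, Ne.symm hne, hjk⟩
  by_cases hk : k = 0
  · subst hk; exact ⟨j, hj, hjk.symm⟩
  exact absurd (hrest hj hk hjk) hne

end

/-- Offset from `i` of the `k`-th vertex of the auxiliary `n`-cycle; `detour n t n = 3n - 8`
closes it up. -/
def detour (n t k : ℕ) : ℕ :=
  if k = 0 then 0 else if k ≤ t + 1 then k + (n - 6) else k + (2 * n - 8)

section
variable {n t : ℕ}

theorem detour_strictMono (hn : 5 < n) : StrictMono (detour n t) :=
  strictMono_nat_of_lt_succ fun k => by grind [detour]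

theorem detour_zero : detour n t 0 = 0 := rfl

theorem detour_one (hn : 5 < n) : detour n t 1 = n - 5 := by
  grind [detour]

theorem detour_self (hn : 5 < n) (ht : t ≤ n - 2) : detour n t n = 3 * n - 8 := by
  grind [detour]

theorem detour_succ {k : ℕ} (hk : k ≠ 0) (hkt : k ≠ t + 1) :
    detour n t (k + 1) = detour n t k + 1 := by
  grind [detour]

theorem detour_succ_chord (hn : 5 < n) :
    detour n t (t + 2) = detour n t (t + 1) + (n - 1) := by
  grind [detour]

theorem detour_val_succ_le (hn : 5 < n) (ht : t ≤ n - 2) (k : ZMod n) :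
    detour n t (k.val + 1) ≤ 3 * n - 8 := by
  have : NeZero n := ⟨by omega⟩
  exact detour_self hn ht ▸ (detour_strictMono hn).monotone (ZMod.val_lt k)

end

def detourCycle {V : Type*} (n t : ℕ) (v : ZMod (3 * n - 8) → V) (i : ZMod (3 * n - 8)) :
    ZMod n → V :=
  fun k => v (i + detour n t k.val)

section
variable {V C : Type*} {γ : V → V → C} {n t : ℕ} {v : ZMod (3 * n - 8) → V}
  {c : ZMod (3 * n - 8) → C} {i : ZMod (3 * n - 8)}

theorem detourCycle_zero : detourCycle n t v i 0 = v i := by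
  simp only [detourCycle, ZMod.val_zero, detour_zero, Nat.cast_zero, add_zero]

theorem detourCycle_succ (hn : 5 < n) (ht : t ≤ n - 2) (k : ZMod n) :
    detourCycle n t v i (k + 1) = v (i + detour n t (k.val + 1)) := by
  have : NeZero n := ⟨by omega⟩
  refine ZMod.apply_val_add_one (f := fun m => v (i + detour n t m)) ?_ k
  simp only [detour_self hn ht, ZMod.natCast_self, detour_zero, Nat.cast_zero]

theorem detourCycle_injective (hn : 5 < n) (ht : t ≤ n - 2) (hv : Injective v) :
    Injective (detourCycle n t v i) := by
  have : NeZero n := ⟨by omega⟩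
  have hlt (k : ZMod n) : detour n t k.val < 3 * n - 8 :=
    (detour_strictMono hn (Nat.lt_succ_self _)).trans_le (detour_val_succ_le hn ht k)
  intro j k h
  exact ZMod.val_injective n <| (detour_strictMono hn).injective <|
    ZMod.natCast_injOn_Iio _ (hlt j) (hlt k) (add_left_cancel (hv h))

theorem detourCycle_color (hn : 5 < n) (ht : t ≤ n - 2)
    (hc : ∀ i, c i = γ (v i) (v (i + 1)))
    (h1 : ∀ i, γ (v i) (v (i + ((n - 1 : ℕ) : ZMod (3 * n - 8)))) ∈
      ({c i, c (i + 1)} : Set C))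
    {k : ZMod n} (hk : k ≠ 0) :
    ∃ e : ℕ, γ (detourCycle n t v i k) (detourCycle n t v i (k + 1)) = c (i + e) ∧
      detour n t k.val ≤ e ∧ e ≤ detour n t k.val + 1 ∧ e < detour n t (k.val + 1) := by
  rw [detourCycle_succ hn ht]
  have hk0 : k.val ≠ 0 := (ZMod.val_eq_zero k).not.mpr hk
  set d := detour n t k.val with hd
  by_cases hkt : k.val = t + 1
  · have hchord : detour n t (k.val + 1) = d + (n - 1) := by
      rw [hd, hkt]; exact detour_succ_chord hn
    have hd1 := h1 (i + d)
    rw [hchord, Nat.cast_add, ← add_assoc]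
    rcases hd1 with hd1 | hd1
    · exact ⟨d, hd1, le_rfl, by omega, by omega⟩
    · refine ⟨d + 1, ?_, by omega, le_rfl, by omega⟩
      rw [Nat.cast_succ, ← add_assoc]
      exact hd1
  · refine ⟨d, ?_, le_rfl, by omega, by rw [detour_succ hk0 hkt]; omega⟩
    rw [detour_succ hk0 hkt, Nat.cast_succ, ← add_assoc, hc]
    rfl

theorem detourCycle_color_injOn (hn : 5 < n) (ht : t ≤ n - 2)
    (hv : RainbowCycle γ (3 * n - 8) v) (hc : ∀ i, c i = γ (v i) (v (i + 1)))
    (h1 : ∀ i, γ (v i) (v (i + ((n - 1 : ℕ) : ZMod (3 * n - 8)))) ∈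
      ({c i, c (i + 1)} : Set C)) :
    Set.InjOn (fun k => γ (detourCycle n t v i k) (detourCycle n t v i (k + 1))) {0}ᶜ := by
  have : NeZero n := ⟨by omega⟩
  intro j hj k hk h
  obtain ⟨ej, hcj, hj₁, -, hj₂⟩ := detourCycle_color hn ht hc h1 hj
  obtain ⟨ek, hck, hk₁, -, hk₂⟩ := detourCycle_color hn ht hc h1 hk
  have hejk : ej = ek := hv.eq_of_color_eq hc (hj₂.trans_le (detour_val_succ_le hn ht j))
    (hk₂.trans_le (detour_val_succ_le hn ht k)) (hcj.symm.trans (h.trans hck))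
  subst hejk
  exact ZMod.val_injective n <|
    (detour_strictMono hn).eq_of_mem_Ico_succ ⟨hj₁, hj₂⟩ ⟨hk₁, hk₂⟩

theorem exists_chord_color_eq (hn : 5 < n) (ht : t ≤ n - 2)
    (hno : ∀ u : ZMod n → V, ¬ RainbowCycle γ n u)
    (hv : RainbowCycle γ (3 * n - 8) v) (hc : ∀ i, c i = γ (v i) (v (i + 1)))
    (h1 : ∀ i, γ (v i) (v (i + ((n - 1 : ℕ) : ZMod (3 * n - 8)))) ∈
      ({c i, c (i + 1)} : Set C)) :
    ∃ d : ℕ, γ (v i) (v (i + ((n - 5 : ℕ) : ZMod (3 * n - 8)))) = c (i + d) ∧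
      (n - 5 ≤ d ∧ d ≤ n - 4 + t ∨ 2 * n - 6 + t ≤ d ∧ d ≤ 3 * n - 9) := by
  have : NeZero n := ⟨by omega⟩
  obtain ⟨k, hk, hcol⟩ := exists_color_eq_of_not_rainbowCycle (hno _)
    (detourCycle_injective hn ht hv.1) (detourCycle_color_injOn (i := i) hn ht hv hc h1)
  obtain ⟨e, he, he₁, he₂, he₃⟩ := detourCycle_color hn ht hc h1 hk
  rw [detourCycle_zero, detourCycle_succ hn ht, ZMod.val_zero, zero_add, detour_one hn] at hcol
  refine ⟨e, hcol.trans he, ?_⟩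
  have hk0 : k.val ≠ 0 := (ZMod.val_eq_zero k).not.mpr hk
  have hkn := ZMod.val_lt k
  simp only [detour, hk0, Nat.add_one_ne_zero, if_false] at he₁ he₂ he₃
  split_ifs at he₁ he₂ he₃ <;> omega

end

theorem stmt4_general {V C : Type*} (γ : V → V → C)
    (n : ℕ) (hn : 5 < n)
    (hno : ∀ u : ZMod n → V, ¬ RainbowCycle γ n u)
    (v : ZMod (3 * n - 8) → V) (hv : RainbowCycle γ (3 * n - 8) v)
    (c : ZMod (3 * n - 8) → C) (hc : ∀ i, c i = γ (v i) (v (i + 1)))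
    (h1 : ∀ i, γ (v i) (v (i + ((n - 1 : ℕ) : ZMod (3 * n - 8)))) ∈
      ({c i, c (i + 1)} : Set C)) :
    ∀ i, γ (v i) (v (i + ((n - 5 : ℕ) : ZMod (3 * n - 8)))) ∈
      ({c (i + ((n - 5 : ℕ) : ZMod (3 * n - 8))),
        c (i + ((n - 4 : ℕ) : ZMod (3 * n - 8)))} : Set C) := by
  intro i
  obtain ⟨d₀, hd₀, hr₀⟩ :=
    exists_chord_color_eq (t := 0) (i := i) hn (by omega) hno hv hc h1
  obtain ⟨d₁, hd₁, hr₁⟩ :=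
    exists_chord_color_eq (t := 1) (i := i) hn (by omega) hno hv hc h1
  obtain ⟨d₂, hd₂, hr₂⟩ :=
    exists_chord_color_eq (t := n - 2) (i := i) hn le_rfl hno hv hc h1
  have h₀₁ := hv.eq_of_color_eq hc (by omega) (by omega) (hd₀.symm.trans hd₁)
  have h₀₂ := hv.eq_of_color_eq hc (by omega) (by omega) (hd₀.symm.trans hd₂)
  -- `t = 0` and `t = n - 2` leave `d₀ ∈ {n - 5, n - 4, 2n - 6}`; `t = 1` excludes `2n - 6`.
  obtain rfl | rfl : d₀ = n - 5 ∨ d₀ = n - 4 := by omega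
  · exact Or.inl hd₀
  · exact Or.inr hd₀

/-- If `n > 5`, no `n`-cycle is rainbow, `v` is a rainbow `(3n-8)`-cycle with
colors `c i = γ (v i) (v (i+1))`, and `γ (v i) (v (i+n-1)) ∈ {c i, c (i+1)}` for every `i`,
then `γ (v i) (v (i+n-5)) ∈ {c (i+n-5), c (i+n-4)}` for every `i`. -/
theorem stmt4 {V C : Type*} (γ : V → V → C) (hsymm : ∀ x y, γ x y = γ y x)
    (n : ℕ) (hn : 5 < n)
    (hno : ∀ u : ZMod n → V, ¬ RainbowCycle γ n u)
    (v : ZMod (3 * n - 8) → V) (hv : RainbowCycle γ (3 * n - 8) v)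
    (c : ZMod (3 * n - 8) → C) (hc : ∀ i, c i = γ (v i) (v (i + 1)))
    (h1 : ∀ i, γ (v i) (v (i + ((n - 1 : ℕ) : ZMod (3 * n - 8)))) ∈
      ({c i, c (i + 1)} : Set C)) :
    ∀ i, γ (v i) (v (i + ((n - 5 : ℕ) : ZMod (3 * n - 8)))) ∈
      ({c (i + ((n - 5 : ℕ) : ZMod (3 * n - 8))),
        c (i + ((n - 4 : ℕ) : ZMod (3 * n - 8)))} : Set C) :=
  stmt4_general γ n hn hno v hv c hc h1
end

section
/- Let n > 10 and let G be a complete edge-colored graph with coloring γ in which no n-cycle is rainbow. Suppose G contains a rainbow (3n−8)-cycle v_0 → v_1 → ⋯ → v_{3n−9} → v_0 with (pairwise distinct) edge colors c_i = γ(v_i, v_{i+1}), all indices taken modulo 3n−8, and suppose that γ(v_i, v_{i+n−1}) ∈ {c_i, c_{i+1}} and γ(v_i, v_{i+n−5}) ∈ {c_{i+n−5}, c_{i+n−4}} for every i. Then γ(v_i, v_{i+7}) ∈ {c_i, c_{i+1}} for every i modulo 3n−8. -/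
/-!
Fix `i` and write `j` for the vertex `v (i + j)` of the rainbow cycle, so that `c j` is the color
of the cycle edge `{j, j + 1}`, a chord `{j, j + n - 1}` has color `c j` or `c (j + 1)`, and a chord
`{j, j + n - 5}` has color `c (j + n - 5)` or `c (j + n - 4)`. Each of the `n`-cycles
* `0, 7, 8, …, n + 2, 3, 2, 1`,
* `0, 7, n + 2, 2n - 3, 2n - 4, 2n - 5, 3n - 10, 3n - 11, …, 2n - 1, 2, 1`,
* `0, 7, n + 6, 11, 12, …, n + 4, 2n - 1, 2n - 2, 2n - 3`

consists of the chord `{0, 7}` and of edges of these three kinds, and the candidate colors of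
different edges are different. As the `n`-cycle is not rainbow, the color of `{0, 7}` is a
candidate color of another of its edges. The three sets of candidate colors meet only in
`{c 0, c 1}`.
-/

open Function

theorem ZMod.intCast_injOn_Ico (m : ℕ) : Set.InjOn (Int.cast : ℤ → ZMod m) (Set.Ico 0 m) := by
  intro s hs t ht h
  rwa [ZMod.intCast_eq_intCast_iff', Int.emod_eq_of_lt hs.1 hs.2, Int.emod_eq_of_lt ht.1 ht.2] at h

section

variable {V C : Type*} {γ : V → V → C}

theorem exists_color_mem_of_not_rainbowCycle {n : ℕ} {u : ZMod n → V}
    (hu : ¬ RainbowCycle γ n u) (hinj : Injective u) {A : ZMod n → Set C}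
    (hA : ∀ p ≠ 0, γ (u p) (u (p + 1)) ∈ A p) (hdisj : ({0}ᶜ : Set (ZMod n)).PairwiseDisjoint A) :
    ∃ p ≠ 0, γ (u 0) (u 1) ∈ A p := by
  obtain ⟨p, q, hpq, hne⟩ := not_injective_iff.mp fun h => hu ⟨hinj, h⟩
  rcases eq_or_ne p 0 with rfl | hp
  · rw [zero_add] at hpq
    exact ⟨q, hne.symm, hpq ▸ hA q hne.symm⟩
  rcases eq_or_ne q 0 with rfl | hq
  · rw [zero_add] at hpq
    exact ⟨p, hp, hpq ▸ hA p hp⟩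
  exact absurd (hdisj hp hq hne) (Set.not_disjoint_iff.mpr ⟨_, hA p hp, hpq ▸ hA q hq⟩)

/-- The color of the edge between the vertices `v (i + x)` and `v (i + y)` is forced to be
`c (i + s)` for some `s` with `S s`; offsets are integers read modulo `m`. -/
inductive KnownEdge (m n : ℕ) (S : ℤ → Prop) : ℤ → ℤ → Prop
  | succ {x y : ℤ} : y = x + 1 → S x → KnownEdge m n S x y
  | chordSubOne {x y : ℤ} : y = x + n - 1 → S x → S (x + 1) → KnownEdge m n S x y
  | chordSubFive {x y : ℤ} : y = x + n - 5 ∨ y = x + n - 5 - m → S y → S (y + 1) →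
      KnownEdge m n S x y
  | symm {x y : ℤ} : KnownEdge m n S x y → KnownEdge m n S y x

variable {m n : ℕ} {v : ZMod m → V} {c : ZMod m → C}

theorem KnownEdge.exists_color (hsymm : ∀ x y, γ x y = γ y x)
    (hc : ∀ j, c j = γ (v j) (v (j + 1)))
    (h1 : ∀ j, γ (v j) (v (j + ((n - 1 : ℕ) : ZMod m))) ∈ ({c j, c (j + 1)} : Set C))
    (h2 : ∀ j, γ (v j) (v (j + ((n - 5 : ℕ) : ZMod m))) ∈
      ({c (j + ((n - 5 : ℕ) : ZMod m)), c (j + ((n - 4 : ℕ) : ZMod m))} : Set C))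
    (hn : 5 ≤ n) (i : ZMod m) {S : ℤ → Prop} {x y : ℤ} (hxy : KnownEdge m n S x y) :
    ∃ s, S s ∧ γ (v (i + x)) (v (i + y)) = c (i + s) := by
  induction hxy with
  | @succ x y hy hx =>
    subst hy
    exact ⟨x, hx, by rw [hc]; push_cast; rw [add_assoc]⟩
  | @chordSubOne x y hy hx hx₁ =>
    have hy' : i + x + ((n - 1 : ℕ) : ZMod m) = i + y := by
      rw [hy, Nat.cast_sub (by omega)]; push_cast; ring
    obtain h | h : _ = c (i + x) ∨ _ = c (i + x + 1) := h1 (i + x)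
    · exact ⟨x, hx, by rwa [hy'] at h⟩
    · exact ⟨x + 1, hx₁, by rw [hy'] at h; rw [h, Int.cast_add, Int.cast_one, add_assoc]⟩
  | @chordSubFive x y hy hy₀ hy₁ =>
    have hy' : i + x + ((n - 5 : ℕ) : ZMod m) = i + y := by
      rw [Nat.cast_sub hn]
      rcases hy with rfl | rfl
      · push_cast; ring
      · push_cast; rw [ZMod.natCast_self]; ring
    have h4 : i + x + ((n - 4 : ℕ) : ZMod m) = i + (y + 1 : ℤ) := by
      rw [show n - 4 = n - 5 + 1 by omega, Nat.cast_add, ← add_assoc, hy']; push_cast; ring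
    obtain h | h : _ = _ ∨ _ = _ := h2 (i + x)
    · exact ⟨y, hy₀, by rwa [hy'] at h⟩
    · exact ⟨y + 1, hy₁, by rwa [hy', h4] at h⟩
  | symm _ ih =>
    obtain ⟨s, hs, he⟩ := ih
    exact ⟨s, hs, hsymm _ _ ▸ he⟩

theorem RainbowCycle.eq_of_color_eq_s5 (hv : RainbowCycle γ m v)
    (hc : ∀ j, c j = γ (v j) (v (j + 1))) (i : ZMod m) {s t : ℤ} (hs : s ∈ Set.Ico 0 (m : ℤ))
    (ht : t ∈ Set.Ico 0 (m : ℤ)) (h : c (i + s) = c (i + t)) : s = t :=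
  ZMod.intCast_injOn_Ico m hs ht (add_left_cancel (hv.2 (by simpa only [hc] using h)))

/-- `pos 0, …, pos (n - 1)` are the vertex offsets of an `n`-cycle through the chord `{0, k}`, and
`colors a` holds the candidate colors of its edge `{pos a, pos (a + 1)}`. -/
structure IsChordCycle (m n : ℕ) (k : ℤ) (pos : ℕ → ℤ) (colors : ℕ → ℤ → Prop) : Prop where
  pos_zero : pos 0 = 0
  pos_one : pos 1 = k
  pos_n : pos n = 0
  pos_mem : ∀ a < n, pos a ∈ Set.Ico 0 (m : ℤ)
  injOn_pos : Set.InjOn pos (Set.Iio n)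
  knownEdge : ∀ a, 1 ≤ a → a < n → KnownEdge m n (colors a) (pos a) (pos (a + 1))
  colors_mem : ∀ a s, colors a s → s ∈ Set.Ico 0 (m : ℤ)
  eq_of_colors : ∀ a b s, colors a s → colors b s → a = b

theorem IsChordCycle.exists_chord_color_eq {k : ℤ} {pos : ℕ → ℤ} {colors : ℕ → ℤ → Prop}
    (hD : IsChordCycle m n k pos colors) (hsymm : ∀ x y, γ x y = γ y x)
    (hno : ∀ u : ZMod n → V, ¬ RainbowCycle γ n u) (hv : RainbowCycle γ m v)
    (hc : ∀ j, c j = γ (v j) (v (j + 1)))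
    (h1 : ∀ j, γ (v j) (v (j + ((n - 1 : ℕ) : ZMod m))) ∈ ({c j, c (j + 1)} : Set C))
    (h2 : ∀ j, γ (v j) (v (j + ((n - 5 : ℕ) : ZMod m))) ∈
      ({c (j + ((n - 5 : ℕ) : ZMod m)), c (j + ((n - 4 : ℕ) : ZMod m))} : Set C))
    (hn : 5 ≤ n) (i : ZMod m) :
    ∃ a s, colors a s ∧ s ∈ Set.Ico 0 (m : ℤ) ∧ γ (v i) (v (i + k)) = c (i + s) := by
  have : NeZero n := ⟨by omega⟩
  have hnext (p : ZMod n) : pos (p + 1).val = pos (p.val + 1) := by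
    rw [ZMod.val_add, ZMod.val_one'' (by omega)]
    rcases Nat.lt_or_ge (p.val + 1) n with h | h
    · rw [Nat.mod_eq_of_lt h]
    · rw [show p.val + 1 = n by have := ZMod.val_lt p; omega, Nat.mod_self, hD.pos_n, hD.pos_zero]
  set u : ZMod n → V := fun p => v (i + pos p.val)
  have hu : Injective u := fun p q h => ZMod.val_injective n <| hD.injOn_pos (ZMod.val_lt p)
    (ZMod.val_lt q) <| ZMod.intCast_injOn_Ico m (hD.pos_mem _ (ZMod.val_lt p))
      (hD.pos_mem _ (ZMod.val_lt q)) (add_left_cancel (hv.1 h))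
  set A : ZMod n → Set C := fun p => (fun s : ℤ => c (i + s)) '' {s | colors p.val s}
  have hA (p : ZMod n) (hp : p ≠ 0) : γ (u p) (u (p + 1)) ∈ A p := by
    have ha : 1 ≤ p.val := Nat.one_le_iff_ne_zero.mpr ((ZMod.val_ne_zero p).mpr hp)
    obtain ⟨s, hs, he⟩ := (hD.knownEdge _ ha (ZMod.val_lt p)).exists_color hsymm hc h1 h2 hn i
    exact ⟨s, hs, by simp [u, hnext, he]⟩
  have hdisj : ({0}ᶜ : Set (ZMod n)).PairwiseDisjoint A := by
    intro p _ q _ hpq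
    refine Set.disjoint_left.mpr ?_
    rintro _ ⟨s, hs, rfl⟩ ⟨t, ht, he⟩
    have hts : t = s := hv.eq_of_color_eq_s5 hc i (hD.colors_mem _ _ ht) (hD.colors_mem _ _ hs) he
    exact hpq (ZMod.val_injective n (hD.eq_of_colors _ _ _ hs (hts ▸ ht)))
  obtain ⟨p, -, s, hs, he⟩ := exists_color_mem_of_not_rainbowCycle (hno u) hu hA hdisj
  refine ⟨p.val, s, hs, hD.colors_mem _ _ hs, ?_⟩
  simpa [u, ZMod.val_one'' (show n ≠ 1 by omega), hD.pos_zero, hD.pos_one] using he.symm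

def cycle₁ (n a : ℕ) : ℤ :=
  if a = 0 then 0 else if a + 4 ≤ n then a + 6 else
  if a + 3 = n then 3 else if a + 2 = n then 2 else if a + 1 = n then 1 else 0

def cycleColors₁ (n a : ℕ) (s : ℤ) : Prop :=
  (1 ≤ a ∧ a + 5 ≤ n ∧ s = a + 6) ∨ (a + 4 = n ∧ (s = 3 ∨ s = 4)) ∨
    (a + 3 = n ∧ s = 2) ∨ (a + 2 = n ∧ s = 1) ∨ (a + 1 = n ∧ s = 0)

theorem cycle₁_cases {a : ℕ} (ha : a ≤ n) :
    (a = 0 ∧ cycle₁ n a = 0) ∨ (1 ≤ a ∧ a + 4 ≤ n ∧ cycle₁ n a = a + 6) ∨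
      (a + 3 = n ∧ cycle₁ n a = 3) ∨ (a + 2 = n ∧ cycle₁ n a = 2) ∨
      (a + 1 = n ∧ cycle₁ n a = 1) ∨ (a = n ∧ cycle₁ n a = 0) := by
  generalize hx : cycle₁ n a = x
  unfold cycle₁ at hx
  split_ifs at hx <;>
    repeat (first | (left; and_intros <;> omega) | right)
  all_goals and_intros <;> omega

theorem isChordCycle_cycle₁ (hn : 10 < n) (hm : (m : ℤ) = 3 * n - 8) :
    IsChordCycle m n 7 (cycle₁ n) (cycleColors₁ n) where
  pos_zero := by have := cycle₁_cases (Nat.zero_le n); omega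
  pos_one := by have := cycle₁_cases (n := n) (a := 1) (by omega); omega
  pos_n := by have := cycle₁_cases (le_refl n); omega
  pos_mem a ha := by have := cycle₁_cases ha.le; constructor <;> omega
  injOn_pos a ha b hb h := by
    rw [Set.mem_Iio] at ha hb
    have := cycle₁_cases ha.le; have := cycle₁_cases hb.le; omega
  knownEdge a ha₁ ha := by
    rcases cycle₁_cases ha.le with h | h | h | h | h | h <;>
      rcases cycle₁_cases (a := a + 1) ha with h' | h' | h' | h' | h' | h' <;>
    first
    | omega
    | refine .succ (by omega) ?_
    | refine .symm (.succ (by omega) ?_)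
    | refine .symm (.chordSubOne (by omega) ?_ ?_)
    all_goals
      unfold cycleColors₁
      repeat (first | (left; and_intros <;> omega) | right)
    all_goals and_intros <;> omega
  colors_mem a s h := by unfold cycleColors₁ at h; constructor <;> omega
  eq_of_colors a b s ha hb := by unfold cycleColors₁ at ha hb; omega

def cycle₂ (n a : ℕ) : ℤ :=
  if a = 0 then 0 else if a = 1 then 7 else if a = 2 then n + 2 else
  if a ≤ 5 then 2 * n - a else if a + 3 ≤ n then 3 * n - 4 - a else
  if a + 2 = n then 2 else if a + 1 = n then 1 else 0

def cycleColors₂ (n a : ℕ) (s : ℤ) : Prop :=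
  (a = 1 ∧ (s = n + 2 ∨ s = n + 3)) ∨ (a = 2 ∧ (s = 2 * n - 3 ∨ s = 2 * n - 2)) ∨
    (3 ≤ a ∧ a ≤ 4 ∧ s = 2 * n - 1 - a) ∨ (a = 5 ∧ (s = 3 * n - 10 ∨ s = 3 * n - 9)) ∨
    (6 ≤ a ∧ a + 4 ≤ n ∧ s = 3 * n - 5 - a) ∨ (a + 3 = n ∧ (s = 2 ∨ s = 3)) ∨
    (a + 2 = n ∧ s = 1) ∨ (a + 1 = n ∧ s = 0)

theorem cycle₂_cases {a : ℕ} (ha : a ≤ n) :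
    (a = 0 ∧ cycle₂ n a = 0) ∨ (a = 1 ∧ cycle₂ n a = 7) ∨ (a = 2 ∧ cycle₂ n a = n + 2) ∨
      (3 ≤ a ∧ a ≤ 5 ∧ cycle₂ n a = 2 * n - a) ∨
      (6 ≤ a ∧ a + 3 ≤ n ∧ cycle₂ n a = 3 * n - 4 - a) ∨
      (a + 2 = n ∧ cycle₂ n a = 2) ∨ (a + 1 = n ∧ cycle₂ n a = 1) ∨ (a = n ∧ cycle₂ n a = 0) := by
  generalize hx : cycle₂ n a = x
  unfold cycle₂ at hx
  split_ifs at hx <;>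
    repeat (first | (left; and_intros <;> omega) | right)
  all_goals and_intros <;> omega

theorem isChordCycle_cycle₂ (hn : 10 < n) (hm : (m : ℤ) = 3 * n - 8) :
    IsChordCycle m n 7 (cycle₂ n) (cycleColors₂ n) where
  pos_zero := by have := cycle₂_cases (Nat.zero_le n); omega
  pos_one := by have := cycle₂_cases (n := n) (a := 1) (by omega); omega
  pos_n := by have := cycle₂_cases (le_refl n); omega
  pos_mem a ha := by have := cycle₂_cases ha.le; constructor <;> omega
  injOn_pos a ha b hb h := by
    rw [Set.mem_Iio] at ha hb
    have := cycle₂_cases ha.le; have := cycle₂_cases hb.le; omega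
  knownEdge a ha₁ ha := by
    rcases cycle₂_cases ha.le with h | h | h | h | h | h | h | h <;>
      rcases cycle₂_cases (a := a + 1) ha with h' | h' | h' | h' | h' | h' | h' | h' <;>
    first
    | omega
    | refine .symm (.succ (by omega) ?_)
    | refine .chordSubFive (by omega) ?_ ?_
    all_goals
      unfold cycleColors₂
      repeat (first | (left; and_intros <;> omega) | right)
    all_goals and_intros <;> omega
  colors_mem a s h := by unfold cycleColors₂ at h; constructor <;> omega
  eq_of_colors a b s ha hb := by unfold cycleColors₂ at ha hb; omega

def cycle₃ (n a : ℕ) : ℤ :=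
  if a = 0 then 0 else if a = 1 then 7 else if a = 2 then n + 6 else
  if a + 4 ≤ n then a + 8 else if a + 3 = n then 2 * n - 1 else
  if a + 2 = n then 2 * n - 2 else if a + 1 = n then 2 * n - 3 else 0

def cycleColors₃ (n a : ℕ) (s : ℤ) : Prop :=
  (a = 1 ∧ (s = 7 ∨ s = 8)) ∨ (a = 2 ∧ (s = n + 6 ∨ s = n + 7)) ∨
    (3 ≤ a ∧ a + 5 ≤ n ∧ s = a + 8) ∨ (a + 4 = n ∧ (s = 2 * n - 1 ∨ s = 2 * n)) ∨
    (a + 3 = n ∧ s = 2 * n - 2) ∨ (a + 2 = n ∧ s = 2 * n - 3) ∨ (a + 1 = n ∧ (s = 0 ∨ s = 1))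

theorem cycle₃_cases {a : ℕ} (ha : a ≤ n) :
    (a = 0 ∧ cycle₃ n a = 0) ∨ (a = 1 ∧ cycle₃ n a = 7) ∨ (a = 2 ∧ cycle₃ n a = n + 6) ∨
      (3 ≤ a ∧ a + 4 ≤ n ∧ cycle₃ n a = a + 8) ∨ (a + 3 = n ∧ cycle₃ n a = 2 * n - 1) ∨
      (a + 2 = n ∧ cycle₃ n a = 2 * n - 2) ∨ (a + 1 = n ∧ cycle₃ n a = 2 * n - 3) ∨
      (a = n ∧ cycle₃ n a = 0) := by
  generalize hx : cycle₃ n a = x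
  unfold cycle₃ at hx
  split_ifs at hx <;>
    repeat (first | (left; and_intros <;> omega) | right)
  all_goals and_intros <;> omega

theorem isChordCycle_cycle₃ (hn : 10 < n) (hm : (m : ℤ) = 3 * n - 8) :
    IsChordCycle m n 7 (cycle₃ n) (cycleColors₃ n) where
  pos_zero := by have := cycle₃_cases (Nat.zero_le n); omega
  pos_one := by have := cycle₃_cases (n := n) (a := 1) (by omega); omega
  pos_n := by have := cycle₃_cases (le_refl n); omega
  pos_mem a ha := by have := cycle₃_cases ha.le; constructor <;> omega
  injOn_pos a ha b hb h := by
    rw [Set.mem_Iio] at ha hb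
    have := cycle₃_cases ha.le; have := cycle₃_cases hb.le; omega
  knownEdge a ha₁ ha := by
    rcases cycle₃_cases ha.le with h | h | h | h | h | h | h | h <;>
      rcases cycle₃_cases (a := a + 1) ha with h' | h' | h' | h' | h' | h' | h' | h' <;>
    first
    | omega
    | refine .succ (by omega) ?_
    | refine .symm (.succ (by omega) ?_)
    | refine .chordSubOne (by omega) ?_ ?_
    | refine .chordSubFive (by omega) ?_ ?_
    | refine .symm (.chordSubFive (by omega) ?_ ?_)
    all_goals
      unfold cycleColors₃
      repeat (first | (left; and_intros <;> omega) | right)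
    all_goals and_intros <;> omega
  colors_mem a s h := by unfold cycleColors₃ at h; constructor <;> omega
  eq_of_colors a b s ha hb := by unfold cycleColors₃ at ha hb; omega

theorem le_one_of_cycleColors (hn : 10 < n) {a b d : ℕ} {s : ℤ} (h₁ : cycleColors₁ n a s)
    (h₂ : cycleColors₂ n b s) (h₃ : cycleColors₃ n d s) : s ≤ 1 := by
  unfold cycleColors₁ at h₁
  unfold cycleColors₂ at h₂
  unfold cycleColors₃ at h₃
  omega

end

/-- If `n > 10`, no `n`-cycle is rainbow, `v` is a rainbow `(3n-8)`-cycle with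
colors `c i = γ (v i) (v (i+1))`, `γ (v i) (v (i+n-1)) ∈ {c i, c (i+1)}` and
`γ (v i) (v (i+n-5)) ∈ {c (i+n-5), c (i+n-4)}` for every `i`, then
`γ (v i) (v (i+7)) ∈ {c i, c (i+1)}` for every `i`. -/
theorem stmt5 {V C : Type*} (γ : V → V → C) (hsymm : ∀ x y, γ x y = γ y x)
    (n : ℕ) (hn : 10 < n)
    (hno : ∀ u : ZMod n → V, ¬ RainbowCycle γ n u)
    (v : ZMod (3 * n - 8) → V) (hv : RainbowCycle γ (3 * n - 8) v)
    (c : ZMod (3 * n - 8) → C) (hc : ∀ i, c i = γ (v i) (v (i + 1)))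
    (h1 : ∀ i, γ (v i) (v (i + ((n - 1 : ℕ) : ZMod (3 * n - 8)))) ∈
      ({c i, c (i + 1)} : Set C))
    (h2 : ∀ i, γ (v i) (v (i + ((n - 5 : ℕ) : ZMod (3 * n - 8)))) ∈
      ({c (i + ((n - 5 : ℕ) : ZMod (3 * n - 8))),
        c (i + ((n - 4 : ℕ) : ZMod (3 * n - 8)))} : Set C)) :
    ∀ i, γ (v i) (v (i + 7)) ∈ ({c i, c (i + 1)} : Set C) := by
  intro i
  have hm : ((3 * n - 8 : ℕ) : ℤ) = 3 * n - 8 := by omega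
  have chord {pos colors} (hD : IsChordCycle (3 * n - 8) n 7 pos colors) :=
    hD.exists_chord_color_eq hsymm hno hv hc h1 h2 (by omega) i
  obtain ⟨a₁, s, hs₁, hs, e₁⟩ := chord (isChordCycle_cycle₁ hn hm)
  obtain ⟨a₂, s₂, hs₂, hs₂', e₂⟩ := chord (isChordCycle_cycle₂ hn hm)
  obtain ⟨a₃, s₃, hs₃, hs₃', e₃⟩ := chord (isChordCycle_cycle₃ hn hm)
  obtain rfl := hv.eq_of_color_eq_s5 hc i hs hs₂' (e₁.symm.trans e₂)
  obtain rfl := hv.eq_of_color_eq_s5 hc i hs hs₃' (e₁.symm.trans e₃)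
  have := le_one_of_cycleColors hn hs₁ hs₂ hs₃
  obtain rfl | rfl : s = 0 ∨ s = 1 := by have := hs.1; omega
  all_goals push_cast at e₁; simp [e₁]
end

section
/- Let n = 4k ≥ 12 be an integer divisible by four and let G be a complete edge-colored graph with coloring γ in which no n-cycle is rainbow. Suppose G contains a rainbow (3n−10)-cycle v_0 → v_1 → ⋯ → v_{3n−11} → v_0, and let c_i = γ(v_i, v_{i+1}) denote its (pairwise distinct) edge colors, all indices taken modulo 3n−10. Then there is a dihedral relabeling σ of ℤ/(3n−10) (a map of the form σ(i) = i + t or σ(i) = t − i for some t) such that, setting w_i = v_{σ(i)} and d_i = γ(w_i, w_{i+1}), one has γ(w_i, w_{i+n−1}) ∈ {d_i, d_{i+1}, d_{i+2}} for every i modulo 3n−10. -/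
private lemma castCases {m a b : ℕ} (hm : 0 < m) (ha : a < 2*m) (hb : b < 2*m)
    (h : (a : ZMod m) = (b : ZMod m)) : a = b ∨ a = b + m ∨ b = a + m := by
  have hmod : a % m = b % m := (ZMod.natCast_eq_natCast_iff a b m).mp h
  have e1 := Nat.div_add_mod a m
  have e2 := Nat.div_add_mod b m
  have ha2 : a / m < 2 := Nat.div_lt_of_lt_mul (by omega)
  have hb2 : b / m < 2 := Nat.div_lt_of_lt_mul (by omega)
  interval_cases h1 : (a / m) <;> interval_cases h2 : (b / m) <;> omega

private lemma extract {V C : Type*} (γ : V → V → C) (n m : ℕ) (hn : 2 ≤ n) (hm : 0 < m)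
    (hno : ∀ u : ZMod n → V, ¬ RainbowCycle γ n u)
    (v : ZMod m → V) (hvinj : Function.Injective v)
    (i : ZMod m) (f : ℕ → ℕ)
    (hflt : ∀ p, p < n → f p < m)
    (hfinj : ∀ p q, p < n → q < n → f p = f q → p = q) :
    ∃ p q : ℕ, p < n ∧ q < n ∧ p ≠ q ∧
      γ (v (i + (f p : ZMod m))) (v (i + (f ((p+1) % n) : ZMod m)))
        = γ (v (i + (f q : ZMod m))) (v (i + (f ((q+1) % n) : ZMod m))) := by
  haveI : NeZero n := ⟨by omega⟩
  haveI : NeZero m := ⟨by omega⟩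
  set u : ZMod n → V := fun z => v (i + (f z.val : ZMod m)) with hu
  have huinj : Function.Injective u := by
    intro z z' hzz
    have h1 : i + (f z.val : ZMod m) = i + (f z'.val : ZMod m) := hvinj hzz
    have h2 : ((f z.val : ℕ) : ZMod m) = ((f z'.val : ℕ) : ZMod m) := by
      exact add_left_cancel h1
    have hlt1 := ZMod.val_lt z
    have hlt2 := ZMod.val_lt z'
    have := castCases hm (by have := hflt z.val hlt1; omega) (by have := hflt z'.val hlt2; omega) h2
    have hf1 := hflt z.val hlt1
    have hf2 := hflt z'.val hlt2
    have : f z.val = f z'.val := by omega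
    exact ZMod.val_injective n (hfinj z.val z'.val hlt1 hlt2 this)
  have hnr := hno u
  rw [RainbowCycle] at hnr
  push_neg at hnr
  have hcol := hnr huinj
  rw [Function.not_injective_iff] at hcol
  obtain ⟨z, z', heq, hne⟩ := hcol
  refine ⟨z.val, z'.val, ZMod.val_lt z, ZMod.val_lt z', ?_, ?_⟩
  · intro h; exact hne (ZMod.val_injective n h)
  · haveI : Fact (1 < n) := ⟨by omega⟩
    have hv1 : (z + 1).val = (z.val + 1) % n := by
      rw [ZMod.val_add, ZMod.val_one]
    have hv1' : (z' + 1).val = (z'.val + 1) % n := by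
      rw [ZMod.val_add, ZMod.val_one]
    simpa [hu, hv1, hv1'] using heq

private lemma fam1 {V C : Type*} (γ : V → V → C) (hsymm : ∀ x y, γ x y = γ y x)
    (n : ℕ) (hn : 12 ≤ n)
    (hno : ∀ u : ZMod n → V, ¬ RainbowCycle γ n u)
    (m : ℕ) (hm : m = 3*n-10) (v : ZMod m → V) (hv : RainbowCycle γ m v) :
    ∀ i : ZMod m, ∃ a : ℕ, a ≤ n-2 ∧
      γ (v i) (v (i + ((n-1:ℕ) : ZMod m)))
        = γ (v (i + (a : ZMod m))) (v (i + (a : ZMod m) + 1)) := by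
  intro i
  obtain ⟨p, q, hp, hq, hpq, heq⟩ := extract γ n m (by omega) (by omega) hno v hv.1 i id
    (fun p hp => by simp only [id]; omega) (fun p q _ _ h => h)
  simp only [id] at heq
  have harc : ∀ r : ℕ, r < n-1 →
      γ (v (i + ((r : ℕ) : ZMod m))) (v (i + ((((r+1) % n : ℕ)) : ZMod m)))
        = (fun t : ZMod m => γ (v t) (v (t+1))) (i + (r : ZMod m)) := by
    intro r hr
    rw [Nat.mod_eq_of_lt (by omega)]
    push_cast
    ring_nf
  have hchord : γ (v (i + (((n-1) : ℕ) : ZMod m))) (v (i + (((((n-1)+1) % n) : ℕ) : ZMod m)))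
      = γ (v (i + ((n-1:ℕ) : ZMod m))) (v i) := by
    rw [Nat.sub_add_cancel (by omega), Nat.mod_self]
    norm_num
  rcases eq_or_ne p (n-1) with hp1 | hp1 <;> rcases eq_or_ne q (n-1) with hq1 | hq1
  · omega
  · -- chord at p, arc at q
    subst hp1
    rw [hchord, harc q (by omega)] at heq
    exact ⟨q, by omega, by rw [hsymm] at heq; exact heq⟩
  · subst hq1
    rw [hchord, harc p (by omega)] at heq
    exact ⟨p, by omega, by rw [hsymm] at heq; exact heq.symm⟩
  · -- two arcs: contradiction
    rw [harc p (by omega), harc q (by omega)] at heq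
    have h2 : i + (p : ZMod m) = i + (q : ZMod m) := hv.2 heq
    have h3 : ((p:ℕ) : ZMod m) = ((q:ℕ) : ZMod m) := add_left_cancel h2
    have := castCases (a := p) (b := q) (by omega) (by omega) (by omega) h3
    omega

private def f3 (n p : ℕ) : ℕ := if p = 0 then 0 else if p ≤ n-4 then n-2+p else n-p

private lemma fam3 {V C : Type*} (γ : V → V → C) (hsymm : ∀ x y, γ x y = γ y x)
    (n k : ℕ) (hk : n = 4*k) (hn : 12 ≤ n)
    (hno : ∀ u : ZMod n → V, ¬ RainbowCycle γ n u)
    (m : ℕ) (hm : m = 3*n-10) (v : ZMod m → V) (hv : RainbowCycle γ m v)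
    (a : ZMod m → ℕ) (ha1 : ∀ j, a j ≤ n-2)
    (ha2 : ∀ j, γ (v j) (v (j + ((n-1:ℕ) : ZMod m)))
        = γ (v (j + (a j : ZMod m))) (v (j + (a j : ZMod m) + 1))) :
    ∀ i : ZMod m, a i ≤ 2 ∨ n-4 ≤ a (i + ((2*n-6 : ℕ) : ZMod m)) := by
  intro i
  obtain ⟨p, q, hp, hq, hpq, heq⟩ := extract γ n m (by omega) (by omega) hno v hv.1 i (f3 n)
    (by intro p hp; simp only [f3]; split_ifs <;> omega)
    (by intro p q hp hq h; simp only [f3] at h; split_ifs at h <;> omega)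
  set j : ZMod m := i + ((2*n-6 : ℕ) : ZMod m) with hj
  have key : ∀ p, p < n → ∃ X : ℕ,
      ((p = 0 ∧ X = a i) ∨ (1 ≤ p ∧ p ≤ n-5 ∧ X = n-2+p) ∨
        (p = n-4 ∧ X = 2*n-6 + a j) ∨ (n-3 ≤ p ∧ X = n-p-1)) ∧
      γ (v (i + ((f3 n p : ℕ) : ZMod m))) (v (i + ((f3 n ((p+1) % n) : ℕ) : ZMod m)))
        = (fun t : ZMod m => γ (v t) (v (t+1))) (i + (X : ZMod m)) := by
    intro p hp
    rcases eq_or_ne p 0 with h0 | h0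
    · -- chord g i
      refine ⟨a i, Or.inl ⟨h0, rfl⟩, ?_⟩
      subst h0
      have e1 : f3 n 0 = 0 := by simp [f3]
      have e2 : (0+1) % n = 1 := Nat.mod_eq_of_lt (by omega)
      have e3 : f3 n 1 = n-1 := by simp only [f3]; rw [if_neg one_ne_zero, if_pos (by omega)]; omega
      rw [e2, e1, e3]
      simp only [Nat.cast_zero, add_zero]
      have := ha2 i
      simpa using this
    · rcases le_or_gt p (n-5) with h5 | h5
      · -- forward arc
        refine ⟨n-2+p, Or.inr (Or.inl ⟨by omega, h5, rfl⟩), ?_⟩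
        have e1 : f3 n p = n-2+p := by simp only [f3]; rw [if_neg h0, if_pos (by omega)]
        have e2 : (p+1) % n = p+1 := Nat.mod_eq_of_lt (by omega)
        have e3 : f3 n (p+1) = (n-2+p)+1 := by
          simp only [f3]; rw [if_neg (by omega), if_pos (by omega)]; omega
        rw [e2, e1, e3]
        push_cast
        ring_nf
      · rcases eq_or_ne p (n-4) with h4 | h4
        · -- second chord, at j
          refine ⟨2*n-6 + a j, Or.inr (Or.inr (Or.inl ⟨h4, rfl⟩)), ?_⟩
          have e1 : f3 n p = 2*n-6 := by simp only [f3]; rw [if_neg h0, if_pos (by omega)]; omega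
          have e2 : (p+1) % n = n-3 := by rw [Nat.mod_eq_of_lt (by omega)]; omega
          have e3 : f3 n (n-3) = 3 := by simp only [f3]; rw [if_neg (by omega), if_neg (by omega)]; omega
          rw [e2, e1, e3]
          have e4 : ((3:ℕ) : ZMod m) = ((2*n-6 : ℕ) : ZMod m) + ((n-1 : ℕ) : ZMod m) := by
            have : ((2*n-6 : ℕ) : ZMod m) + ((n-1 : ℕ) : ZMod m) = ((2*n-6 + (n-1) : ℕ) : ZMod m) := by
              push_cast; ring
            rw [this, show 2*n-6 + (n-1) = 3 + m by omega]
            push_cast [ZMod.natCast_self]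
            ring
          rw [e4, ← add_assoc, ← hj]
          have := ha2 j
          rw [this]
          simp only [hj]
          push_cast
          ring_nf
        · -- backward arcs (p ∈ [n-3, n-1])
          refine ⟨n-p-1, Or.inr (Or.inr (Or.inr ⟨by omega, rfl⟩)), ?_⟩
          have e1 : f3 n p = n-p := by simp only [f3]; rw [if_neg h0, if_neg (by omega)]
          have e2 : f3 n ((p+1) % n) = n-p-1 := by
            rcases eq_or_ne p (n-1) with h9 | h9
            · rw [h9, show (n-1+1) % n = 0 by rw [Nat.sub_add_cancel (by omega), Nat.mod_self]]
              have : f3 n 0 = 0 := by simp [f3]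
              rw [this]; omega
            · rw [Nat.mod_eq_of_lt (by omega)]
              simp only [f3]; rw [if_neg (by omega), if_neg (by omega)]; omega
          rw [e1, e2, hsymm]
          have e5 : ((n-p : ℕ) : ZMod m) = ((n-p-1 : ℕ) : ZMod m) + 1 := by
            rw [show n-p = (n-p-1)+1 by omega]; push_cast; ring
          rw [e5, ← add_assoc]
  obtain ⟨Xp, hdp, hep⟩ := key p hp
  obtain ⟨Xq, hdq, heq2⟩ := key q hq
  rw [hep, heq2] at heq
  have h2 : i + (Xp : ZMod m) = i + (Xq : ZMod m) := hv.2 heq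
  have h3 : ((Xp:ℕ) : ZMod m) = ((Xq:ℕ) : ZMod m) := add_left_cancel h2
  have hai := ha1 i
  have haj := ha1 j
  have := castCases (a := Xp) (b := Xq) (by omega) (by omega) (by omega) h3
  omega

private def f2 (n k p : ℕ) : ℕ := if p ≤ 2*k-1 then p else n + 4*k - 2 - p

private lemma fam2 {V C : Type*} (γ : V → V → C) (hsymm : ∀ x y, γ x y = γ y x)
    (n k : ℕ) (hk : n = 4*k) (hn : 12 ≤ n)
    (hno : ∀ u : ZMod n → V, ¬ RainbowCycle γ n u)
    (m : ℕ) (hm : m = 3*n-10) (v : ZMod m → V) (hv : RainbowCycle γ m v)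
    (a : ZMod m → ℕ) (ha1 : ∀ j, a j ≤ n-2)
    (ha2 : ∀ j, γ (v j) (v (j + ((n-1:ℕ) : ZMod m)))
        = γ (v (j + (a j : ZMod m))) (v (j + (a j : ZMod m) + 1))) :
    ∀ i : ZMod m, a i ≤ 2*k-2 ∨ 2*k ≤ a (i + ((2*k-1 : ℕ) : ZMod m)) ∨
      a i = a (i + ((2*k-1 : ℕ) : ZMod m)) + (2*k-1) := by
  intro i
  obtain ⟨p, q, hp, hq, hpq, heq⟩ := extract γ n m (by omega) (by omega) hno v hv.1 i (f2 n k)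
    (by intro p hp; simp only [f2]; split_ifs <;> omega)
    (by intro p q hp hq h; simp only [f2] at h; split_ifs at h <;> omega)
  set j : ZMod m := i + ((2*k-1 : ℕ) : ZMod m) with hj
  have key : ∀ p, p < n → ∃ X : ℕ,
      ((p ≤ 2*k-2 ∧ X = p) ∨ (p = 2*k-1 ∧ X = (2*k-1) + a j) ∨
        (2*k ≤ p ∧ p ≤ n-2 ∧ X = n+4*k-3-p) ∨ (p = n-1 ∧ X = a i)) ∧
      γ (v (i + ((f2 n k p : ℕ) : ZMod m))) (v (i + ((f2 n k ((p+1) % n) : ℕ) : ZMod m)))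
        = (fun t : ZMod m => γ (v t) (v (t+1))) (i + (X : ZMod m)) := by
    intro p hp
    rcases le_or_gt p (2*k-2) with h0 | h0
    · -- forward arc
      refine ⟨p, Or.inl ⟨h0, rfl⟩, ?_⟩
      have e1 : f2 n k p = p := by simp only [f2]; rw [if_pos (by omega)]
      have e2 : (p+1) % n = p+1 := Nat.mod_eq_of_lt (by omega)
      have e3 : f2 n k (p+1) = p+1 := by simp only [f2]; rw [if_pos (by omega)]
      rw [e2, e1, e3]
      push_cast
      ring_nf
    · rcases eq_or_ne p (2*k-1) with h1 | h1
      · -- middle chord, at j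
        refine ⟨(2*k-1) + a j, Or.inr (Or.inl ⟨h1, rfl⟩), ?_⟩
        subst h1
        have e1 : f2 n k (2*k-1) = 2*k-1 := by simp only [f2]; rw [if_pos le_rfl]
        have e2 : (2*k-1+1) % n = 2*k := by rw [Nat.mod_eq_of_lt (by omega)]; omega
        have e3 : f2 n k (2*k) = (2*k-1) + (n-1) := by
          simp only [f2]; rw [if_neg (by omega)]; omega
        rw [e2, e1, e3]
        have e4 : (((2*k-1) + (n-1) : ℕ) : ZMod m) = ((2*k-1 : ℕ) : ZMod m) + ((n-1:ℕ) : ZMod m) := by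
          push_cast; ring
        rw [e4, ← add_assoc, ← hj]
        rw [ha2 j]
        simp only [hj]
        push_cast
        ring_nf
      · rcases eq_or_ne p (n-1) with h9 | h9
        · -- long chord g i
          refine ⟨a i, Or.inr (Or.inr (Or.inr ⟨h9, rfl⟩)), ?_⟩
          subst h9
          have e1 : f2 n k (n-1) = n-1 := by simp only [f2]; rw [if_neg (by omega)]; omega
          have e2 : (n-1+1) % n = 0 := by rw [Nat.sub_add_cancel (by omega), Nat.mod_self]
          have e3 : f2 n k 0 = 0 := by simp only [f2]; rw [if_pos (by omega)]
          rw [e2, e1, e3]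
          simp only [Nat.cast_zero, add_zero]
          rw [hsymm]
          simpa using ha2 i
        · -- backward arc
          refine ⟨n+4*k-3-p, Or.inr (Or.inr (Or.inl ⟨by omega, by omega, rfl⟩)), ?_⟩
          have e1 : f2 n k p = n+4*k-2-p := by simp only [f2]; rw [if_neg (by omega)]
          have e2 : (p+1) % n = p+1 := Nat.mod_eq_of_lt (by omega)
          have e3 : f2 n k (p+1) = n+4*k-3-p := by simp only [f2]; rw [if_neg (by omega)]; omega
          rw [e2, e1, e3, hsymm]
          have e5 : ((n+4*k-2-p : ℕ) : ZMod m) = ((n+4*k-3-p : ℕ) : ZMod m) + 1 := by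
            rw [show n+4*k-2-p = (n+4*k-3-p)+1 by omega]; push_cast; ring
          rw [e5, ← add_assoc]
  obtain ⟨Xp, hdp, hep⟩ := key p hp
  obtain ⟨Xq, hdq, heq2⟩ := key q hq
  rw [hep, heq2] at heq
  have h2 : i + (Xp : ZMod m) = i + (Xq : ZMod m) := hv.2 heq
  have h3 : ((Xp:ℕ) : ZMod m) = ((Xq:ℕ) : ZMod m) := add_left_cancel h2
  have hai := ha1 i
  have haj := ha1 j
  have := castCases (a := Xp) (b := Xq) (by omega) (by omega) (by omega) h3
  omega

private lemma existsTwo (n k m : ℕ) (hk : n = 4*k) (hn : 12 ≤ n) (hm : m = 3*n-10) :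
    ∃ t : ℕ, ((t*(2*n-6) : ℕ) : ZMod m) = ((2:ℕ) : ZMod m) := by
  have hcop : Nat.Coprime (4*k-3) (6*k-5) := by
    have h1 : Nat.gcd (4*k-3) (6*k-5) ∣ 4*k-3 := Nat.gcd_dvd_left _ _
    have h2 : Nat.gcd (4*k-3) (6*k-5) ∣ 6*k-5 := Nat.gcd_dvd_right _ _
    have h3 : Nat.gcd (4*k-3) (6*k-5) ∣ 3*(4*k-3) - 2*(6*k-5) :=
      Nat.dvd_sub (h1.mul_left 3) (h2.mul_left 2)
    have h4 : 3*(4*k-3) - 2*(6*k-5) = 1 := by omega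
    rw [h4] at h3
    exact Nat.dvd_one.mp h3
  obtain ⟨b, -, hb⟩ := Nat.exists_mul_mod_eq_one_of_coprime hcop (by omega)
  refine ⟨b, ?_⟩
  have hdm := Nat.div_add_mod ((4*k-3)*b) (6*k-5)
  set s := (4*k-3)*b / (6*k-5) with hs
  have e0 : (4*k-3)*b = (6*k-5)*s + 1 := by omega
  have e1 : b*(2*n-6) = m*s + 2 := by
    calc b*(2*n-6) = 2*((4*k-3)*b) := by rw [show 2*n-6 = 2*(4*k-3) by omega]; ring
    _ = 2*((6*k-5)*s) + 2 := by rw [e0]; ring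
    _ = m*s + 2 := by rw [show m = 2*(6*k-5) by omega, mul_assoc]
  rw [e1]
  push_cast [ZMod.natCast_self]
  ring

private lemma mainLem {V C : Type*} (γ : V → V → C) (hsymm : ∀ x y, γ x y = γ y x)
    (n k : ℕ) (hk : n = 4 * k) (hn : 12 ≤ n)
    (hno : ∀ u : ZMod n → V, ¬ RainbowCycle γ n u)
    (m : ℕ) (hm : m = 3*n-10)
    (v : ZMod m → V) (hv : RainbowCycle γ m v) :
    ∃ σ : ZMod m → ZMod m,
      ((∃ t, ∀ i, σ i = i + t) ∨ (∃ t, ∀ i, σ i = t - i)) ∧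
      ∀ i : ZMod m,
        γ (v (σ i)) (v (σ (i + ((n - 1 : ℕ) : ZMod m)))) ∈
          ({γ (v (σ i)) (v (σ (i + 1))),
            γ (v (σ (i + 1))) (v (σ (i + 2))),
            γ (v (σ (i + 2))) (v (σ (i + 3)))} : Set C) := by
  haveI : NeZero m := ⟨by omega⟩
  choose a ha1 ha2 using fam1 γ hsymm n hn hno m hm v hv
  have C3 := fam3 γ hsymm n k hk hn hno m hm v hv a ha1 ha2
  have C2 := fam2 γ hsymm n k hk hn hno m hm v hv a ha1 ha2
  by_cases hP : ∀ i : ZMod m, a i ≤ 2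
  · refine ⟨id, Or.inl ⟨0, fun i => by simp⟩, ?_⟩
    intro i
    simp only [id_eq]
    have h := ha2 i
    rcases (show a i = 0 ∨ a i = 1 ∨ a i = 2 from by have := hP i; omega) with h0 | h0 | h0 <;>
      rw [h0] at h
    · simp only [Nat.cast_zero, add_zero] at h
      rw [h]
      exact Set.mem_insert _ _
    · simp only [Nat.cast_one] at h
      rw [show i + (1 : ZMod m) + 1 = i + 2 from by ring] at h
      rw [h]
      exact Set.mem_insert_of_mem _ (Set.mem_insert _ _)
    · rw [show ((2:ℕ) : ZMod m) = 2 from by push_cast; ring] at h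
      rw [show i + (2 : ZMod m) + 1 = i + 3 from by ring] at h
      rw [h]
      exact Set.mem_insert_of_mem _ (Set.mem_insert_of_mem _ rfl)
  · push_neg at hP
    obtain ⟨i₀, hi₀⟩ := hP
    have Qstep : ∀ x : ZMod m, n-4 ≤ a x → n-4 ≤ a (x + ((2*n-6 : ℕ) : ZMod m)) := by
      intro x hx
      rcases C3 x with h | h
      · omega
      · exact h
    have Qbase : n-4 ≤ a (i₀ + ((2*n-6 : ℕ) : ZMod m)) := by
      rcases C3 i₀ with h | h
      · omega
      · exact h
    have Qiter : ∀ r : ℕ, n-4 ≤ a (i₀ + ((2*n-6 : ℕ) : ZMod m) + ((r*(2*n-6) : ℕ) : ZMod m)) := by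
      intro r
      induction r with
      | zero => simpa using Qbase
      | succ r ih =>
        have h2 := Qstep _ ih
        have e : i₀ + ((2*n-6 : ℕ) : ZMod m) + ((r*(2*n-6) : ℕ) : ZMod m) + ((2*n-6 : ℕ) : ZMod m)
            = i₀ + ((2*n-6 : ℕ) : ZMod m) + (((r+1)*(2*n-6) : ℕ) : ZMod m) := by
          rw [show (r+1)*(2*n-6) = r*(2*n-6) + (2*n-6) from by ring, Nat.cast_add]
          ring
        rwa [e] at h2
    obtain ⟨t2, ht2⟩ := existsTwo n k m hk hn hm
    have Qeven : ∀ y : ZMod m, n-4 ≤ a (i₀ + ((2*n-6 : ℕ) : ZMod m) + 2*y) := by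
      intro y
      have h2 := Qiter (t2 * y.val)
      have e : (((t2*y.val)*(2*n-6) : ℕ) : ZMod m) = 2*y := by
        rw [show (t2*y.val)*(2*n-6) = (t2*(2*n-6))*y.val from by ring, Nat.cast_mul, ht2,
          ZMod.natCast_rightInverse y]
        push_cast
        ring
      rwa [e] at h2
    have hQ : ∀ jx : ZMod m, n-4 ≤ a jx := by
      by_contra hc
      push_neg at hc
      obtain ⟨j₁, hj₁⟩ := hc
      have Pbase : a (j₁ - ((2*n-6 : ℕ) : ZMod m)) ≤ 2 := by
        rcases C3 (j₁ - ((2*n-6 : ℕ) : ZMod m)) with h | h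
        · exact h
        · rw [sub_add_cancel] at h; omega
      have Pstep : ∀ x : ZMod m, a x ≤ 2 → a (x - ((2*n-6 : ℕ) : ZMod m)) ≤ 2 := by
        intro x hx
        rcases C3 (x - ((2*n-6 : ℕ) : ZMod m)) with h | h
        · exact h
        · rw [sub_add_cancel] at h; omega
      have Piter : ∀ r : ℕ, a (j₁ - ((2*n-6 : ℕ) : ZMod m) - ((r*(2*n-6) : ℕ) : ZMod m)) ≤ 2 := by
        intro r
        induction r with
        | zero => simpa using Pbase
        | succ r ih =>
          have h2 := Pstep _ ih
          have e : j₁ - ((2*n-6 : ℕ) : ZMod m) - ((r*(2*n-6) : ℕ) : ZMod m) - ((2*n-6 : ℕ) : ZMod m)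
              = j₁ - ((2*n-6 : ℕ) : ZMod m) - (((r+1)*(2*n-6) : ℕ) : ZMod m) := by
            rw [show (r+1)*(2*n-6) = r*(2*n-6) + (2*n-6) from by ring, Nat.cast_add]
            ring
          rwa [e] at h2
      have Peven : ∀ y : ZMod m, a (j₁ - ((2*n-6 : ℕ) : ZMod m) - 2*y) ≤ 2 := by
        intro y
        have h2 := Piter (t2 * y.val)
        have e : (((t2*y.val)*(2*n-6) : ℕ) : ZMod m) = 2*y := by
          rw [show (t2*y.val)*(2*n-6) = (t2*(2*n-6))*y.val from by ring, Nat.cast_mul, ht2,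
            ZMod.natCast_rightInverse y]
          push_cast
          ring
        rwa [e] at h2
      have hrv : (((j₁ - (i₀ + ((2*n-6 : ℕ) : ZMod m))).val : ℕ) : ZMod m)
          = j₁ - (i₀ + ((2*n-6 : ℕ) : ZMod m)) := ZMod.natCast_rightInverse _
      rcases Nat.even_or_odd ((j₁ - (i₀ + ((2*n-6 : ℕ) : ZMod m))).val) with ⟨w, hw⟩ | ⟨w, hw⟩
      · have h2 := Qeven ((w : ℕ) : ZMod m)
        have e : i₀ + ((2*n-6 : ℕ) : ZMod m) + 2*((w:ℕ) : ZMod m) = j₁ := by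
          have e2 : (((j₁ - (i₀ + ((2*n-6 : ℕ) : ZMod m))).val : ℕ) : ZMod m)
              = 2*((w:ℕ) : ZMod m) := by rw [hw]; push_cast; ring
          rw [← e2, hrv]
          ring
        rw [e] at h2
        omega
      · have hQi : n-4 ≤ a (i₀ + ((2*n-6 : ℕ) : ZMod m)) := Qbase
        have hPj : a ((i₀ + ((2*n-6 : ℕ) : ZMod m)) + ((2*k-1 : ℕ) : ZMod m)) ≤ 2 := by
          have h2 := Peven ((w : ZMod m) + 1 - (k : ZMod m) - (n : ZMod m) + 3)
          have e : j₁ - ((2*n-6 : ℕ) : ZMod m) - 2*((w : ZMod m) + 1 - (k : ZMod m) - (n : ZMod m) + 3)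
              = (i₀ + ((2*n-6 : ℕ) : ZMod m)) + ((2*k-1 : ℕ) : ZMod m) := by
            have h1 : j₁ = i₀ + ((2*n-6 : ℕ) : ZMod m)
                + (((j₁ - (i₀ + ((2*n-6 : ℕ) : ZMod m))).val : ℕ) : ZMod m) := by
              rw [hrv]; ring
            rw [h1, hw]
            have hc1 : ((2*w+1 : ℕ) : ZMod m) = 2*(w : ZMod m)+1 := by push_cast; ring
            have hc2 : ((2*k-1 : ℕ) : ZMod m) = 2*(k : ZMod m)-1 := by
              rw [Nat.cast_sub (by omega : 1 ≤ 2*k)]; push_cast; ring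
            have hc3 : ((2*n-6 : ℕ) : ZMod m) = 2*(n : ZMod m)-6 := by
              rw [Nat.cast_sub (by omega : 6 ≤ 2*n)]; push_cast; ring
            rw [hc1, hc2, hc3]
            ring
          rwa [e] at h2
        rcases C2 (i₀ + ((2*n-6 : ℕ) : ZMod m)) with h | h | h <;> omega
    -- reflection case
    refine ⟨fun x => -x, Or.inr ⟨0, fun i => by rw [zero_sub]⟩, ?_⟩
    intro i
    simp only []
    have h := ha2 (-i - ((n-1:ℕ) : ZMod m))
    have hb1 := ha1 (-i - ((n-1:ℕ) : ZMod m))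
    have hb2 := hQ (-i - ((n-1:ℕ) : ZMod m))
    have hL : γ (v (-i)) (v (-(i + ((n-1:ℕ) : ZMod m))))
        = γ (v (-i - ((n-1:ℕ) : ZMod m) + (a (-i - ((n-1:ℕ) : ZMod m)) : ZMod m)))
          (v (-i - ((n-1:ℕ) : ZMod m) + (a (-i - ((n-1:ℕ) : ZMod m)) : ZMod m) + 1)) := by
      rw [← h, hsymm]
      have e1 : -i - ((n-1:ℕ) : ZMod m) + ((n-1:ℕ) : ZMod m) = -i := by ring
      have e2 : -(i + ((n-1:ℕ) : ZMod m)) = -i - ((n-1:ℕ) : ZMod m) := by ring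
      rw [e1, e2]
    rw [hL]
    rcases (show a (-i - ((n-1:ℕ) : ZMod m)) = n-4 ∨ a (-i - ((n-1:ℕ) : ZMod m)) = n-3 ∨
        a (-i - ((n-1:ℕ) : ZMod m)) = n-2 from by omega) with h4 | h4 | h4 <;> rw [h4]
    · -- third element
      have e1 : -i - ((n-1:ℕ) : ZMod m) + ((n-4:ℕ) : ZMod m) = -(i+3) := by
        rw [show (n-1 : ℕ) = (n-4) + 3 from by omega, Nat.cast_add]
        push_cast
        ring
      have e2 : -i - ((n-1:ℕ) : ZMod m) + ((n-4:ℕ) : ZMod m) + 1 = -(i+2) := by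
        rw [show (n-1 : ℕ) = (n-4) + 3 from by omega, Nat.cast_add]
        push_cast
        ring
      rw [e2, e1]
      exact Set.mem_insert_of_mem _ (Set.mem_insert_of_mem _
        (Set.mem_singleton_iff.mpr (hsymm _ _)))
    · have e1 : -i - ((n-1:ℕ) : ZMod m) + ((n-3:ℕ) : ZMod m) = -(i+2) := by
        rw [show (n-1 : ℕ) = (n-3) + 2 from by omega, Nat.cast_add]
        push_cast
        ring
      have e2 : -i - ((n-1:ℕ) : ZMod m) + ((n-3:ℕ) : ZMod m) + 1 = -(i+1) := by
        rw [show (n-1 : ℕ) = (n-3) + 2 from by omega, Nat.cast_add]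
        push_cast
        ring
      rw [e2, e1]
      exact Set.mem_insert_iff.mpr (Or.inr (Set.mem_insert_iff.mpr (Or.inl (hsymm _ _))))
    · have e1 : -i - ((n-1:ℕ) : ZMod m) + ((n-2:ℕ) : ZMod m) = -(i+1) := by
        rw [show (n-1 : ℕ) = (n-2) + 1 from by omega, Nat.cast_add]
        push_cast
        ring
      have e2 : -i - ((n-1:ℕ) : ZMod m) + ((n-2:ℕ) : ZMod m) + 1 = -i := by
        rw [show (n-1 : ℕ) = (n-2) + 1 from by omega, Nat.cast_add]
        push_cast
        ring
      rw [e2, e1]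
      exact Set.mem_insert_iff.mpr (Or.inl (hsymm _ _))

/-- If `n = 4k ≥ 12`, no `n`-cycle is rainbow, and `v` is a rainbow
`(3n-10)`-cycle with colors `c i = γ (v i) (v (i+1))`, then after a dihedral relabeling `σ`
of `ℤ/(3n-10)` we have `γ (w i) (w (i+n-1)) ∈ {d i, d (i+1), d (i+2)}` for every `i`,
where `w i = v (σ i)` and `d i = γ (w i) (w (i+1))`. -/
theorem stmt7 {V C : Type*} (γ : V → V → C) (hsymm : ∀ x y, γ x y = γ y x)
    (n k : ℕ) (hk : n = 4 * k) (hn : 12 ≤ n)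
    (hno : ∀ u : ZMod n → V, ¬ RainbowCycle γ n u)
    (v : ZMod (3 * n - 10) → V) (hv : RainbowCycle γ (3 * n - 10) v) :
    ∃ σ : ZMod (3 * n - 10) → ZMod (3 * n - 10),
      ((∃ t, ∀ i, σ i = i + t) ∨ (∃ t, ∀ i, σ i = t - i)) ∧
      ∀ i : ZMod (3 * n - 10),
        γ (v (σ i)) (v (σ (i + ((n - 1 : ℕ) : ZMod (3 * n - 10))))) ∈
          ({γ (v (σ i)) (v (σ (i + 1))),
            γ (v (σ (i + 1))) (v (σ (i + 2))),
            γ (v (σ (i + 2))) (v (σ (i + 3)))} : Set C) := by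
  exact mainLem γ hsymm n k hk hn hno (3*n-10) rfl v hv
end
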